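/- arXiv:1002.0309 — 9 statements merged into one kernel-verified Lean document; each statement's English description precedes it below -/
import Mathlib

section
/- If g⁻¹ is a right n-Engel element of a group G (i.e., [g⁻¹,_n x] = 1 for all x ∈ G), then g is a left (n+1)-Engel element of G (i.e., [x,_{n+1} g] = 1 for all x ∈ G). -/
/-!
Write `aᵇ = b⁻¹ a b`. Then `[x, g] = (g⁻¹)ˣ g`, and `[a b,ₖ b] = [a,ₖ b]ᵇ` for `k ≥ 1`, so
`[x,ₙ₊₂ g] = [(g⁻¹)ˣ g,ₙ₊₁ g] = [(g⁻¹)ˣ,ₙ₊₁ g]ᵍ = ([g⁻¹,ₙ₊₁ g^(x⁻¹)]ˣ)ᵍ = 1`.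
For `n = 0` the hypothesis says `g = 1`.
-/

/-- The commutator `[a,b] = a⁻¹ b⁻¹ a b`. -/
def cmt {G : Type*} [Group G] (a b : G) : G := a⁻¹ * b⁻¹ * a * b

/-- Left-normed Engel commutator: `engel x y 0 = x`, `engel x y (n+1) = [engel x y n, y]`. -/
def engel {G : Type*} [Group G] (x y : G) : ℕ → G
  | 0 => x
  | n + 1 => cmt (engel x y n) y

section Engel

variable {G H : Type*} [Group G] [Group H]

lemma map_cmt (f : G →* H) (a b : G) : f (cmt a b) = cmt (f a) (f b) := by
  simp only [cmt, map_mul, map_inv]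

lemma map_engel (f : G →* H) (x y : G) : ∀ n : ℕ, f (engel x y n) = engel (f x) (f y) n
  | 0 => rfl
  | n + 1 => by rw [engel, engel, map_cmt, map_engel f x y n]

lemma engel_succ_eq_engel_cmt (x y : G) : ∀ n : ℕ, engel x y (n + 1) = engel (cmt x y) y n
  | 0 => rfl
  | n + 1 => by rw [engel, engel_succ_eq_engel_cmt x y n, engel]

lemma engel_mul_self_succ (a b : G) :
    ∀ n : ℕ, engel (a * b) b (n + 1) = b⁻¹ * engel a b (n + 1) * b
  | 0 => by simp only [engel, cmt]; group
  | n + 1 => by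
    rw [engel, engel_mul_self_succ a b n]
    simp only [engel, cmt]
    group

end Engel

theorem stmt1 {G : Type*} [Group G] (g : G) (n : ℕ)
    (h : ∀ x : G, engel g⁻¹ x n = 1) :
    ∀ x : G, engel x g (n + 1) = 1 := by
  intro x
  cases n with
  | zero =>
    have hg : g = 1 := inv_eq_one.mp (h 1)
    simp [engel, cmt, hg]
  | succ m =>
    have hconj : engel (x⁻¹ * g⁻¹ * x) g (m + 1) = 1 := by
      have hmap := map_engel (MulAut.conj x⁻¹).toMonoidHom g⁻¹ (x * g * x⁻¹) (m + 1)
      simp only [MulEquiv.coe_toMonoidHom, MulAut.conj_apply, inv_inv, h, map_one] at hmap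
      rw [hmap]
      group
    rw [engel_succ_eq_engel_cmt, cmt, engel_mul_self_succ, hconj]
    group
end

section
/- Let G be a group and x ∈ G with x² = 1. Then for every g ∈ G and every integer n ≥ 1, [g,_n x] = [g,x]^((-2)^(n-1)). -/
/-!
Conjugation by an involution `x` inverts `c = [g, x]`, hence inverts every power of `c`.
So `[c ^ k, x] = c⁻ᵏ · x⁻¹ cᵏ x = c ^ (-2k)`, and each further commutation with `x`
multiplies the exponent by `-2`.
-/

section

variable {G : Type*} [Group G]

lemma engel_succ (a b : G) (n : ℕ) : engel a b (n + 1) = cmt (engel a b n) b := rfl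

lemma conj_cmt_of_sq_eq_one {x : G} (hx : x ^ 2 = 1) (g : G) :
    x⁻¹ * cmt g x * x = (cmt g x)⁻¹ := by
  have hinv : x⁻¹ = x := inv_eq_of_mul_eq_one_right (by rw [← sq, hx])
  simp only [cmt, hinv, mul_inv_rev, inv_inv, mul_assoc, ← sq, hx, mul_one]

lemma cmt_zpow_of_conj_eq_inv {c x : G} (hc : x⁻¹ * c * x = c⁻¹) (k : ℤ) :
    cmt (c ^ k) x = c ^ (-2 * k) := by
  have hconj : x⁻¹ * c ^ k * x = c ^ (-k) := by
    rw [zpow_neg, ← inv_zpow, ← hc]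
    simpa only [inv_inv] using (conj_zpow (a := x⁻¹) (b := c) (i := k)).symm
  calc cmt (c ^ k) x = (c ^ k)⁻¹ * (x⁻¹ * c ^ k * x) := by simp only [cmt, mul_assoc]
    _ = c ^ (-2 * k) := by rw [hconj, ← zpow_neg, ← zpow_add]; ring_nf

lemma engel_succ_of_conj_eq_inv {g x : G} (hc : x⁻¹ * cmt g x * x = (cmt g x)⁻¹) (n : ℕ) :
    engel g x (n + 1) = cmt g x ^ ((-2 : ℤ) ^ n) := by
  induction n with
  | zero => simp [engel]
  | succ n ih => rw [engel_succ, ih, cmt_zpow_of_conj_eq_inv hc, pow_succ', neg_mul]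

end

theorem stmt3 {G : Type*} [Group G] (x : G) (hx : x ^ 2 = 1) :
    ∀ g : G, ∀ n : ℕ, 1 ≤ n → engel g x n = (cmt g x) ^ ((-2 : ℤ) ^ (n - 1)) := by
  intro g n hn
  obtain ⟨m, rfl⟩ := Nat.exists_eq_add_of_le' hn
  simpa using engel_succ_of_conj_eq_inv (conj_cmt_of_sq_eq_one hx g) m
end

section
/- Let G be a group and x ∈ G with x² = 1. If for every g ∈ G the commutator [g,x] has order dividing 2ⁿ, then x is a left (n+1)-Engel element of G, i.e., [g,_{n+1} x] = 1 for all g ∈ G. -/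
/-!
Since `x` is an involution, conjugation by `x` inverts `c = [g, x]`, so `[c ^ m, x] = c ^ (-2 m)`.
Hence `[g,_{k+1} x] = c ^ ((-2) ^ k)`, and `c ^ (2 ^ n) = 1` kills `[g,_{n+1} x]`.
-/

section

variable {G : Type*} [Group G]

theorem inv_mul_cmt_mul_of_inv_eq_self {x : G} (hx : x⁻¹ = x) (g : G) :
    x⁻¹ * cmt g x * x = (cmt g x)⁻¹ := by
  have hxx : x * x = 1 := by simpa only [hx] using mul_inv_cancel x
  simp only [cmt, hx, mul_inv_rev, inv_inv, mul_assoc, hxx, mul_one]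

theorem cmt_zpow_of_inv_mul_mul_eq_inv {c x : G} (hc : x⁻¹ * c * x = c⁻¹) (m : ℤ) :
    cmt (c ^ m) x = c ^ (-2 * m) := by
  have hconj : x⁻¹ * c ^ m * x = c ^ (-m) := by
    have h := conj_zpow (i := m) (a := x⁻¹) (b := c)
    rw [inv_inv, hc] at h
    rw [← h, inv_zpow, zpow_neg]
  rw [cmt, mul_assoc, mul_assoc, ← mul_assoc x⁻¹, hconj, ← zpow_neg, ← zpow_add]
  ring_nf

theorem engel_succ_eq_cmt_zpow {x : G} (hx : x⁻¹ = x) (g : G) (k : ℕ) :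
    engel g x (k + 1) = cmt g x ^ ((-2 : ℤ) ^ k) := by
  induction k with
  | zero => simp [engel]
  | succ k ih =>
    rw [engel, ih, cmt_zpow_of_inv_mul_mul_eq_inv (inv_mul_cmt_mul_of_inv_eq_self hx g), pow_succ,
      mul_comm]

end

theorem stmt4 {G : Type*} [Group G] (x : G) (hx : x ^ 2 = 1) (n : ℕ)
    (h : ∀ g : G, (cmt g x) ^ (2 ^ n) = 1) :
    ∀ g : G, engel g x (n + 1) = 1 := by
  intro g
  have hx_inv : x⁻¹ = x := inv_eq_of_mul_eq_one_right (by rw [← sq, hx])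
  have hpow : (-2 : ℤ) ^ n = ((2 ^ n : ℕ) : ℤ) * (-1) ^ n := by
    push_cast; rw [← mul_pow]; norm_num
  rw [engel_succ_eq_cmt_zpow hx_inv, hpow, zpow_mul, zpow_natCast, h g, one_zpow]
end

section
/- For any group G, an element x ∈ G is a left 2-Engel element (i.e., [g, x, x] = 1 for all g ∈ G) if and only if the normal closure of ⟨x⟩ in G is abelian. -/
/-! Since `[g, x] = (x ^ g)⁻¹ * x`, the element `[g, x]` commutes with `x` exactly when the
conjugate `x ^ g` does. So `x` is left 2-Engel iff `x` commutes with all its conjugates, iff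
any two conjugates of `x` commute (conjugate the relation), iff the subgroup they generate,
the normal closure of `x`, is abelian. -/

section Commutator

variable {G : Type*} [Group G]

theorem cmt_eq_one_iff (a b : G) : cmt a b = 1 ↔ Commute a b := by
  rw [show cmt a b = (b * a)⁻¹ * (a * b) by simp [cmt, mul_assoc], inv_mul_eq_one,
    commute_iff_eq, eq_comm]

theorem cmt_eq_inv_conj_mul (g x : G) : cmt g x = (g⁻¹ * x * g)⁻¹ * x := by
  simp [cmt, mul_assoc]

theorem commute_cmt_iff_commute_conj (g x : G) :
    Commute (cmt g x) x ↔ Commute (g⁻¹ * x * g) x := by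
  rw [cmt_eq_inv_conj_mul, (IsRightRegular.all x).commute_mul_right_iff, Commute.inv_right_iff,
    Commute.symm_iff]

open Subgroup in
theorem normalClosure_mul_comm_iff (s : Set G) :
    (∀ a ∈ normalClosure s, ∀ b ∈ normalClosure s, a * b = b * a) ↔
      ∀ a ∈ s, ∀ b ∈ s, ∀ g : G, Commute (g⁻¹ * a * g) b := by
  constructor
  · intro h a ha b hb g
    have hconj : g⁻¹ * a * g ∈ normalClosure s := by
      simpa using normalClosure_normal.conj_mem a (subset_normalClosure ha) g⁻¹
    exact h _ hconj b (subset_normalClosure hb)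
  · intro h
    have hcomm : ∀ a ∈ Group.conjugatesOfSet s, ∀ b ∈ Group.conjugatesOfSet s, Commute a b := by
      simp only [Group.mem_conjugatesOfSet_iff, isConj_iff]
      rintro _ ⟨a, ha, c, rfl⟩ _ ⟨b, hb, d, rfl⟩
      simpa [mul_assoc] using (h a ha b hb (c⁻¹ * d)).conj d
    have := isMulCommutative_closure hcomm
    exact fun a ha b hb => setLike_mul_comm (s := closure (Group.conjugatesOfSet s)) ha hb

end Commutator

theorem stmt6 {G : Type*} [Group G] (x : G) :
    (∀ g : G, cmt (cmt g x) x = 1) ↔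
      (∀ a ∈ Subgroup.normalClosure ({x} : Set G),
        ∀ b ∈ Subgroup.normalClosure ({x} : Set G), a * b = b * a) := by
  simp only [normalClosure_mul_comm_iff, Set.mem_singleton_iff, forall_eq, cmt_eq_one_iff,
    commute_cmt_iff_commute_conj]
end

section
/- Let G be a group and x, y ∈ G satisfy [x,_n y] = 1. Then the subgroup generated by the conjugates of x by powers of y equals ⟨x, x^y, ..., x^{y^{n-1}}⟩, i.e., the normal closure of ⟨x⟩ in ⟨x,y⟩ restricted to ⟨y⟩-conjugation is generated by n conjugates x^{y^i}, 0 ≤ i ≤ n-1. -/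
open Subgroup

section

variable {G : Type*} [Group G]

theorem conj_mem_of_mem_closure {s : Set G} {K : Subgroup G} {c g : G}
    (hs : ∀ a ∈ s, c⁻¹ * a * c ∈ K) (hg : g ∈ closure s) : c⁻¹ * g * c ∈ K := by
  have : closure s ≤ K.comap (MulAut.conj c⁻¹).toMonoidHom :=
    (closure_le _).2 fun a ha => by simpa using hs a ha
  simpa using this hg

theorem mem_normalizer_closure_of_conj_mem {s : Set G} {g : G}
    (hg : ∀ a ∈ s, g⁻¹ * a * g ∈ closure s) (hg' : ∀ a ∈ s, g * a * g⁻¹ ∈ closure s) :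
    g ∈ normalizer (closure s : Set G) := by
  refine mem_normalizer_iff''.2 fun h => ⟨conj_mem_of_mem_closure hg, fun hh => ?_⟩
  simpa [mul_assoc] using conj_mem_of_mem_closure (c := g⁻¹) (by simpa using hg') hh

theorem engel_succ_s10 (x y : G) (m : ℕ) :
    engel x y (m + 1) = (engel x y m)⁻¹ * (y⁻¹ * engel x y m * y) := by
  simp only [engel, cmt, mul_assoc]

def conjugatesBelow (x y : G) (m : ℕ) : Set G := {g : G | ∃ i < m, g = (y ^ i)⁻¹ * x * y ^ i}

theorem conjugatesBelow_mono (x y : G) {m m' : ℕ} (h : m ≤ m') :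
    conjugatesBelow x y m ⊆ conjugatesBelow x y m' := by
  rintro g ⟨i, hi, rfl⟩
  exact ⟨i, hi.trans_le h, rfl⟩

theorem conjugate_pow_mem_closure_conjugatesBelow (x y : G) {i m : ℕ} (hi : i < m) :
    (y ^ i)⁻¹ * x * y ^ i ∈ closure (conjugatesBelow x y m) :=
  subset_closure ⟨i, hi, rfl⟩

theorem inv_mul_conjugate_pow_mul (x y : G) (i : ℕ) :
    y⁻¹ * ((y ^ i)⁻¹ * x * y ^ i) * y = (y ^ (i + 1))⁻¹ * x * y ^ (i + 1) := by
  rw [pow_succ]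
  group

theorem conj_mem_closure_conjugatesBelow_succ (x y : G) {m : ℕ} {g : G}
    (hg : g ∈ closure (conjugatesBelow x y m)) :
    y⁻¹ * g * y ∈ closure (conjugatesBelow x y (m + 1)) := by
  refine conj_mem_of_mem_closure ?_ hg
  rintro _ ⟨i, hi, rfl⟩
  rw [inv_mul_conjugate_pow_mul]
  exact conjugate_pow_mem_closure_conjugatesBelow x y (Nat.succ_lt_succ hi)

theorem exists_mem_closure_engel_eq_mul (x y : G) (m : ℕ) :
    ∃ w ∈ closure (conjugatesBelow x y m), engel x y m = w * ((y ^ m)⁻¹ * x * y ^ m) := by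
  induction m with
  | zero => exact ⟨1, one_mem _, by simp [engel]⟩
  | succ m ih =>
    obtain ⟨w, hw, he⟩ := ih
    have hw' := closure_mono (conjugatesBelow_mono x y m.le_succ) hw
    have hc := conjugate_pow_mem_closure_conjugatesBelow x y m.lt_succ_self
    refine ⟨((y ^ m)⁻¹ * x * y ^ m)⁻¹ * w⁻¹ * (y⁻¹ * w * y),
      mul_mem (mul_mem (inv_mem hc) (inv_mem hw')) (conj_mem_closure_conjugatesBelow_succ x y hw),
      ?_⟩
    rw [engel_succ_s10, he, ← inv_mul_conjugate_pow_mul]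
    group

theorem engel_mem_closure_conjugatesBelow_succ (x y : G) (m : ℕ) :
    engel x y m ∈ closure (conjugatesBelow x y (m + 1)) := by
  obtain ⟨w, hw, he⟩ := exists_mem_closure_engel_eq_mul x y m
  rw [he]
  exact mul_mem (closure_mono (conjugatesBelow_mono x y m.le_succ) hw)
    (conjugate_pow_mem_closure_conjugatesBelow x y m.lt_succ_self)

theorem mul_mul_inv_mem_closure_insert_engel (x y : G) (m : ℕ) :
    y * x * y⁻¹ ∈ closure (insert (y * engel x y m * y⁻¹) (conjugatesBelow x y m)) := by
  induction m with
  | zero => exact subset_closure (Set.mem_insert _ _)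
  | succ m ih =>
    set K := closure (insert (y * engel x y (m + 1) * y⁻¹) (conjugatesBelow x y (m + 1)))
    have hsub : closure (conjugatesBelow x y (m + 1)) ≤ K := closure_mono (Set.subset_insert _ _)
    have hnext : y * engel x y (m + 1) * y⁻¹ ∈ K := subset_closure (Set.mem_insert _ _)
    have hprev : y * engel x y m * y⁻¹ ∈ K := by
      have : y * engel x y m * y⁻¹ = engel x y m * (y * engel x y (m + 1) * y⁻¹)⁻¹ := by
        rw [engel_succ_s10]
        group
      rw [this]
      exact mul_mem (hsub (engel_mem_closure_conjugatesBelow_succ x y m)) (inv_mem hnext)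
    refine (closure_le K).2 (Set.insert_subset_iff.2 ⟨hprev, fun a ha => ?_⟩) ih
    exact hsub (subset_closure (conjugatesBelow_mono x y m.le_succ ha))

theorem mem_normalizer_closure_conjugatesBelow (x y : G) (n : ℕ)
    (hlast : (y ^ n)⁻¹ * x * y ^ n ∈ closure (conjugatesBelow x y n))
    (hfirst : y * x * y⁻¹ ∈ closure (conjugatesBelow x y n)) :
    y ∈ normalizer (closure (conjugatesBelow x y n) : Set G) := by
  refine mem_normalizer_closure_of_conj_mem ?_ ?_
  · rintro _ ⟨i, hi, rfl⟩
    rw [inv_mul_conjugate_pow_mul]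
    rcases (Nat.succ_le_of_lt hi).lt_or_eq with hlt | rfl
    · exact conjugate_pow_mem_closure_conjugatesBelow x y hlt
    · exact hlast
  · rintro _ ⟨_ | i, hi, rfl⟩
    · simpa using hfirst
    · rw [← inv_mul_conjugate_pow_mul]
      simpa [mul_assoc] using conjugate_pow_mem_closure_conjugatesBelow x y (i.lt_succ_self.trans hi)

end

theorem stmt10 {G : Type*} [Group G] (x y : G) (n : ℕ)
    (h : engel x y n = 1) :
    Subgroup.closure (Set.range fun k : ℤ => (y ^ k)⁻¹ * x * y ^ k) =
      Subgroup.closure {g : G | ∃ i < n, g = (y ^ i)⁻¹ * x * y ^ i} := by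
  change _ = closure (conjugatesBelow x y n)
  have hlast : (y ^ n)⁻¹ * x * y ^ n ∈ closure (conjugatesBelow x y n) := by
    obtain ⟨w, hw, he⟩ := exists_mem_closure_engel_eq_mul x y n
    rw [h, eq_comm, mul_eq_one_iff_inv_eq] at he
    exact he ▸ inv_mem hw
  have hfirst : y * x * y⁻¹ ∈ closure (conjugatesBelow x y n) := by
    simpa [h, closure_insert_one] using mul_mul_inv_mem_closure_insert_engel x y n
  have hy := mem_normalizer_closure_conjugatesBelow x y n hlast hfirst
  have hx : x ∈ closure (conjugatesBelow x y n) := by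
    simpa [mul_assoc] using (mem_normalizer_iff''.1 hy _).1 hfirst
  refine le_antisymm ((closure_le _).2 ?_) (closure_mono ?_)
  · rintro _ ⟨k, rfl⟩
    exact (mem_normalizer_iff''.1 (zpow_mem hy k) x).1 hx
  · rintro _ ⟨i, -, rfl⟩
    exact ⟨i, by simp⟩
end

section
/- Let G be a group and x, y ∈ G satisfy [x,_n y] = 1. Then ⟨x⟩^{⟨y⟩} = ⟨x, [x,y], [x,y,y], ..., [x,_{n-1} y]⟩. -/
/-!
Write `e i = engel x y i`; the identity `y⁻¹ (e i) y = e i * e (i + 1)` drives everything.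
It shows that a subgroup containing `x` and normalized by `y` contains every `e i`.
Conversely, `K = ⟨e i | i⟩` contains `x` and conjugation by `y` maps `K` into itself; since
`e n = 1`, descending induction on `i` shows that `K` also lies in its own image, so `y`
normalizes `K` and `K` contains every `x^(y^k)`.
-/

section

open Subgroup

variable {G : Type*} [Group G] {x y : G} {n : ℕ}

theorem inv_mul_engel_mul (x y : G) (i : ℕ) :
    y⁻¹ * engel x y i * y = engel x y i * engel x y (i + 1) := by
  simp only [engel, cmt]
  group

theorem engel_eq_one_of_le (h : engel x y n = 1) {i : ℕ} (hi : n ≤ i) : engel x y i = 1 := by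
  induction i, hi using Nat.le_induction with
  | base => exact h
  | succ i _ ih => simp [engel, cmt, ih]

theorem closure_engel_lt_eq (h : engel x y n = 1) :
    closure {g : G | ∃ i < n, g = engel x y i} = closure (Set.range (engel x y)) := by
  refine le_antisymm (closure_mono fun _ ⟨i, _, hg⟩ ↦ ⟨i, hg.symm⟩) ((closure_le _).2 ?_)
  rintro _ ⟨i, rfl⟩
  rcases lt_or_ge i n with hi | hi
  · exact subset_closure ⟨i, hi, rfl⟩
  · rw [engel_eq_one_of_le h hi]
    exact one_mem _

theorem engel_mem_of_mem_normalizer {M : Subgroup G} (hx : x ∈ M)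
    (hy : y ∈ normalizer (M : Set G)) (i : ℕ) : engel x y i ∈ M := by
  induction i with
  | zero => exact hx
  | succ i ih =>
    rw [eq_inv_mul_of_mul_eq (inv_mul_engel_mul x y i).symm]
    exact mul_mem (inv_mem ih) ((mem_normalizer_iff''.1 hy _).1 ih)

theorem engel_mem_of_inv_mul_engel_mul_mem (h : engel x y n = 1) {M : Subgroup G}
    (hM : ∀ i, y⁻¹ * engel x y i * y ∈ M) (i : ℕ) : engel x y i ∈ M := by
  rcases le_or_gt n i with hi | hi
  · rw [engel_eq_one_of_le h hi]
    exact one_mem M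
  refine Nat.decreasingInduction (motive := fun i _ ↦ engel x y i ∈ M) (fun i _ ih ↦ ?_)
    (by rw [h]; exact one_mem M) hi.le
  rw [eq_mul_inv_of_mul_eq (inv_mul_engel_mul x y i).symm]
  exact mul_mem (hM i) (inv_mem ih)

theorem mem_normalizer_closure_range_engel (h : engel x y n = 1) :
    y ∈ normalizer (closure (Set.range (engel x y)) : Set G) := by
  rw [← inv_mem_iff, mem_normalizer_iff_map_conj_eq, MonoidHom.map_closure, ← Set.range_comp]
  refine le_antisymm ((closure_le _).2 ?_) ((closure_le _).2 ?_)
  · rintro _ ⟨i, rfl⟩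
    simpa [inv_mul_engel_mul] using mul_mem (subset_closure (Set.mem_range_self i))
      (subset_closure (Set.mem_range_self (i + 1)))
  · rintro _ ⟨i, rfl⟩
    exact engel_mem_of_inv_mul_engel_mul_mem h
      (fun j ↦ mem_closure_of_mem (Set.mem_range.2 ⟨j, by simp⟩)) i

theorem mem_normalizer_closure_range_conj_zpow (x y : G) :
    y ∈ normalizer (closure (Set.range fun k : ℤ ↦ (y ^ k)⁻¹ * x * y ^ k) : Set G) := by
  refine normalizer_le_normalizer_closure _ (mem_set_normalizer_iff.2 fun g ↦ ⟨?_, ?_⟩)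
  · rintro ⟨k, rfl⟩
    exact ⟨k - 1, by simp only [zpow_sub_one]; group⟩
  · rintro ⟨k, hk⟩
    refine ⟨k + 1, ?_⟩
    rw [← inv_mul_cancel_left y g, ← mul_inv_cancel_right (y * g) y⁻¹, inv_inv, ← hk]
    simp only [zpow_add_one]
    group

theorem closure_range_conj_zpow_le {M : Subgroup G} (hx : x ∈ M)
    (hy : y ∈ normalizer (M : Set G)) :
    closure (Set.range fun k : ℤ ↦ (y ^ k)⁻¹ * x * y ^ k) ≤ M := by
  rw [closure_le]
  rintro _ ⟨k, rfl⟩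
  exact (mem_normalizer_iff''.1 (zpow_mem hy k) x).1 hx

end

theorem stmt11 {G : Type*} [Group G] (x y : G) (n : ℕ)
    (h : engel x y n = 1) :
    Subgroup.closure (Set.range fun k : ℤ => (y ^ k)⁻¹ * x * y ^ k) =
      Subgroup.closure {g : G | ∃ i < n, g = engel x y i} := by
  rw [closure_engel_lt_eq h]
  apply le_antisymm
  · exact closure_range_conj_zpow_le (Subgroup.subset_closure ⟨0, rfl⟩)
      (mem_normalizer_closure_range_engel h)
  · rw [Subgroup.closure_le]
    rintro _ ⟨i, rfl⟩
    exact engel_mem_of_mem_normalizer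
      (Subgroup.mem_closure_of_mem (Set.mem_range.2 ⟨0, by simp⟩))
      (mem_normalizer_closure_range_conj_zpow x y) i
end

section
/- Let G be a group and g ∈ G such that the cyclic subgroup ⟨g⟩ is subnormal in G of defect k (there is a chain ⟨g⟩ = H_0 ⊴ H_1 ⊴ ... ⊴ H_k = G). Then [G,_k ⟨g⟩] ≤ ⟨g⟩ and hence [x,_{k+1} g] = 1 for all x ∈ G, i.e., g is a bounded left Engel element. -/
/-- Iterated subgroup commutator: `iterSub A 0 = ⊤ = G`, `iterSub A (k+1) = ⁅iterSub A k, A⁆`. -/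
def iterSub {G : Type*} [Group G] (A : Subgroup G) : ℕ → Subgroup G
  | 0 => ⊤
  | k + 1 => ⁅iterSub A k, A⁆

open scoped commutatorElement

section

variable {G : Type*} [Group G]

theorem cmt_eq_commutatorElement_inv (a b : G) : cmt a b = ⁅a⁻¹, b⁻¹⁆ := by
  simp only [cmt, commutatorElement_def, inv_inv]

theorem cmt_eq_one_of_commute {a b : G} (h : Commute a b) : cmt a b = 1 := by
  rw [cmt, mul_assoc _ a, h.eq]
  group

theorem engel_mem_iterSub {A : Subgroup G} {y : G} (hy : y ∈ A) (x : G) (n : ℕ) :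
    engel x y n ∈ iterSub A n := by
  induction n with
  | zero => exact Subgroup.mem_top x
  | succ n ih =>
    rw [engel, cmt_eq_commutatorElement_inv]
    exact Subgroup.commutator_mem_commutator (inv_mem ih) (inv_mem hy)

theorem Subgroup.commutator_le_of_le_of_conj_mem {A K N : Subgroup G} (hAK : A ≤ K)
    (hNK : ∀ u ∈ K, ∀ v ∈ N, v⁻¹ * u * v ∈ K) : ⁅N, A⁆ ≤ K := by
  rw [Subgroup.commutator_le]
  intro v hv a ha
  have hconj : v * a * v⁻¹ ∈ K := by simpa using hNK a (hAK ha) v⁻¹ (inv_mem hv)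
  simpa only [commutatorElement_def] using mul_mem hconj (inv_mem (hAK ha))

theorem iterSub_le_of_descending {A : Subgroup G} {L : ℕ → Subgroup G} {n : ℕ}
    (hL : ∀ j < n, ⁅L j, A⁆ ≤ L (j + 1)) (hL0 : L 0 = ⊤) :
    ∀ j ≤ n, iterSub A j ≤ L j
  | 0, _ => hL0.ge
  | j + 1, hj =>
    (Subgroup.commutator_mono (iterSub_le_of_descending hL hL0 j (by omega)) le_rfl).trans
      (hL j hj)

end

theorem stmt13 {G : Type*} [Group G] (g : G) (k : ℕ)
    (H : Fin (k + 1) → Subgroup G)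
    (h0 : H 0 = Subgroup.zpowers g) (hk : H (Fin.last k) = ⊤)
    (hle : ∀ i : Fin k, H i.castSucc ≤ H i.succ)
    (hnorm : ∀ i : Fin k, ∀ u ∈ H i.castSucc, ∀ v ∈ H i.succ,
      v⁻¹ * u * v ∈ H i.castSucc) :
    iterSub (Subgroup.zpowers g) k ≤ Subgroup.zpowers g ∧
      ∀ x : G, engel x g (k + 1) = 1 := by
  have hzpowers_le (i : Fin (k + 1)) : Subgroup.zpowers g ≤ H i :=
    h0 ▸ Fin.monotone_iff_le_succ.mpr hle (Fin.zero_le i)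
  have hstep (i : Fin k) : ⁅H i.succ, Subgroup.zpowers g⁆ ≤ H i.castSucc :=
    Subgroup.commutator_le_of_le_of_conj_mem (hzpowers_le _) (hnorm i)
  let L (j : ℕ) : Subgroup G := H ⟨k - j, by omega⟩
  have hdesc : iterSub (Subgroup.zpowers g) k ≤ L k := by
    refine iterSub_le_of_descending (n := k) (fun j hj => ?_) (hk ▸ rfl) k le_rfl
    have hsucc : L j = H (⟨k - j - 1, by omega⟩ : Fin k).succ :=
      congrArg H (Fin.ext (by simp; omega))
    have hcast : L (j + 1) = H (⟨k - j - 1, by omega⟩ : Fin k).castSucc :=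
      congrArg H (Fin.ext (by simp; omega))
    exact hsucc ▸ hcast ▸ hstep _
  have hle_zpowers : iterSub (Subgroup.zpowers g) k ≤ Subgroup.zpowers g := by
    simpa [L, ← h0] using hdesc
  refine ⟨hle_zpowers, fun x => ?_⟩
  obtain ⟨n, hn⟩ := hle_zpowers (engel_mem_iterSub (Subgroup.mem_zpowers g) x k)
  exact cmt_eq_one_of_commute (hn ▸ Commute.zpow_left (Commute.refl g) n)
end

section
/- Let G be a group and a a left Engel element of G whose cyclic subgroup H = ⟨a⟩ is finite and not normal in G. Then there is an element of G outside H that normalizes H and is a conjugate of a; specifically, there exist x ∈ G and k ≥ 1 such that [x,_k a] ∉ H and [x,_k a] ∈ N_G(H). -/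
/-!
Pick `x` outside `N = N_G(⟨a⟩)`. Since `a` is left Engel, some `[x,_n a] = 1` lies in `N`, so there is
a last index `k` with `y = [x,_k a] ∉ N` and `[y, a] ∈ N`. If `[y, a]` were in `⟨a⟩`, then so would be
`y⁻¹ a y`; hence `y⁻¹ ⟨a⟩ y ≤ ⟨a⟩`, which for the finite group `⟨a⟩` forces equality, i.e. `y ∈ N`.
-/

namespace Subgroup

variable {G : Type*} [Group G]

theorem mem_normalizer_of_map_conj_le {H : Subgroup G} [Finite H] {g : G}
    (hle : H.map (MulAut.conj g).toMonoidHom ≤ H) : g ∈ normalizer (H : Set G) :=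
  mem_normalizer_iff_map_conj_eq.mpr <| eq_of_le_of_card_ge hle <|
    (card_map_of_injective (MulAut.conj g).injective).ge

theorem mem_normalizer_zpowers_of_conj_mem {a g : G} [Finite (zpowers a)]
    (h : g * a * g⁻¹ ∈ zpowers a) : g ∈ normalizer (zpowers a : Set G) :=
  mem_normalizer_of_map_conj_le <| by
    rwa [MonoidHom.map_zpowers, zpowers_le]

end Subgroup

theorem cmt_mem_iff_conj_mem {G : Type*} [Group G] {K : Subgroup G} {a : G} (ha : a ∈ K)
    (y : G) : cmt y a ∈ K ↔ y⁻¹ * a * y ∈ K := by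
  rw [show cmt y a = (y⁻¹ * a * y)⁻¹ * a by simp only [cmt]; group,
    K.mul_mem_cancel_right ha, inv_mem_iff]

theorem stmt15 {G : Type*} [Group G] (a : G)
    (hEngel : ∀ x : G, ∃ n : ℕ, engel x a n = 1)
    (hfin : (Subgroup.zpowers a : Set G).Finite)
    (hnn : ¬ (Subgroup.zpowers a).Normal) :
    ∃ (x : G) (k : ℕ), 1 ≤ k ∧
      engel x a k ∉ Subgroup.zpowers a ∧
      engel x a k ∈ Subgroup.normalizer (Subgroup.zpowers a : Set G) := by
  have : Finite (Subgroup.zpowers a) := hfin.to_subtype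
  set N := Subgroup.normalizer (Subgroup.zpowers a : Set G)
  obtain ⟨x, hx⟩ : ∃ x, x ∉ N := by
    by_contra! h
    exact hnn (Subgroup.normalizer_eq_top_iff.mp (Subgroup.eq_top_iff' _ |>.mpr h))
  obtain ⟨k, hk, hk1⟩ : ∃ k, engel x a k ∉ N ∧ engel x a (k + 1) ∈ N := by
    refine Nat.exists_not_and_succ_of_not_zero_of_exists hx ?_
    obtain ⟨n, hn⟩ := hEngel x
    exact ⟨n, hn ▸ N.one_mem⟩
  refine ⟨x, k + 1, le_add_self, fun hmem => hk ?_, hk1⟩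
  have hconj := (cmt_mem_iff_conj_mem (Subgroup.mem_zpowers a) _).mp hmem
  exact N.inv_mem_iff.mp (Subgroup.mem_normalizer_zpowers_of_conj_mem (by rwa [inv_inv]))
end

section
/- Let G be a group, x, y ∈ G, and for each k ≥ 0 set c_k = [x,_k y]. Then for every k there exists f_k in the subgroup ⟨x, x^y, ..., x^{y^{k-1}}⟩ such that [x,_k y] = f_k · x^{y^k}. -/
/-!
Write `x_i = x^{y^i}` and `K_k = ⟨x_0, …, x_{k-1}⟩`. Induct on `k`: if `[x,_k y] = f x_k` with
`f ∈ K_k`, then `[f x_k, y] = (x_k⁻¹ f⁻¹ f^y) x_{k+1}`, and the first factor lies in `K_{k+1}`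
because conjugation by `y` shifts `x_i` to `x_{i+1}` and hence maps `K_k` into `K_{k+1}`.
-/

section EngelCommutator

variable {G : Type*} [Group G]

theorem cmt_mul (f a y : G) :
    cmt (f * a) y = (a⁻¹ * f⁻¹ * (y⁻¹ * f * y)) * (y⁻¹ * a * y) := by
  simp only [cmt]
  group

theorem conj_mem_closure {s t : Set G} (y : G) (hst : ∀ g ∈ s, y⁻¹ * g * y ∈ Subgroup.closure t)
    {f : G} (hf : f ∈ Subgroup.closure s) : y⁻¹ * f * y ∈ Subgroup.closure t := by
  let φ := (MulAut.conj y⁻¹).toMonoidHom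
  have hle : (Subgroup.closure s).map φ ≤ Subgroup.closure t := by
    rw [MonoidHom.map_closure, Subgroup.closure_le]
    rintro _ ⟨g, hg, rfl⟩
    simpa [φ] using hst g hg
  simpa [φ] using hle (Subgroup.mem_map_of_mem φ hf)

abbrev conjPowClosure (x y : G) (k : ℕ) : Subgroup G :=
  Subgroup.closure {g : G | ∃ i < k, g = (y ^ i)⁻¹ * x * y ^ i}

theorem conj_pow_conj_succ (x y : G) (k : ℕ) :
    y⁻¹ * ((y ^ k)⁻¹ * x * y ^ k) * y = (y ^ (k + 1))⁻¹ * x * y ^ (k + 1) := by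
  group

theorem conj_pow_mem_conjPowClosure (x y : G) {i k : ℕ} (hik : i < k) :
    (y ^ i)⁻¹ * x * y ^ i ∈ conjPowClosure x y k :=
  Subgroup.subset_closure ⟨i, hik, rfl⟩

theorem conjPowClosure_mono (x y : G) (k : ℕ) :
    conjPowClosure x y k ≤ conjPowClosure x y (k + 1) :=
  Subgroup.closure_mono fun _ ⟨i, hi, h⟩ => ⟨i, Nat.lt_succ_of_lt hi, h⟩

theorem conj_mem_conjPowClosure_succ {x y f : G} {k : ℕ} (hf : f ∈ conjPowClosure x y k) :
    y⁻¹ * f * y ∈ conjPowClosure x y (k + 1) := by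
  refine conj_mem_closure y ?_ hf
  rintro _ ⟨i, hi, rfl⟩
  rw [conj_pow_conj_succ]
  exact conj_pow_mem_conjPowClosure x y (Nat.succ_lt_succ hi)

end EngelCommutator

theorem stmt19 {G : Type*} [Group G] (x y : G) :
    ∀ k : ℕ, ∃ f ∈ Subgroup.closure {g : G | ∃ i < k, g = (y ^ i)⁻¹ * x * y ^ i},
      engel x y k = f * ((y ^ k)⁻¹ * x * y ^ k) := by
  intro k
  induction k with
  | zero => exact ⟨1, Subgroup.one_mem _, by simp [engel]⟩
  | succ k ih =>
    obtain ⟨f, hf, hk⟩ := ih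
    set a := (y ^ k)⁻¹ * x * y ^ k
    let K := conjPowClosure x y (k + 1)
    have ha : a ∈ K := conj_pow_mem_conjPowClosure x y (Nat.lt_succ_self k)
    have hf' : f ∈ K := conjPowClosure_mono x y k hf
    refine ⟨a⁻¹ * f⁻¹ * (y⁻¹ * f * y), ?_, ?_⟩
    · exact K.mul_mem (K.mul_mem (K.inv_mem ha) (K.inv_mem hf'))
        (conj_mem_conjPowClosure_succ hf)
    · rw [engel, hk, cmt_mul, conj_pow_conj_succ]
end
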